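/- arXiv:1009.0394 — 3 statements merged into one kernel-verified Lean document; each statement's English description precedes it below -/
import Mathlib

section
/- Let m ≥ 1, d ≥ 0, p ≥ 0 be integers, let h_0, …, h_d be integers (with the convention h_j = 0 for j < 0 or j > d), let β_0, …, β_p be integers, and let 1 ≤ d_0 < d_1 < … < d_p be integers, and assume the identity (1−z)^m · (Σ_{j=0}^{d} h_j z^j) = 1 + Σ_{i=0}^{p} (−1)^{i+1} β_i z^{d_i} holds in ℤ[z]. If moreover β_i ≥ C(p,i) for every 0 ≤ i ≤ p, then Σ_{ℓ=0}^{d_i} (−1)^{ℓ+i+1} C(m,ℓ) h_{d_i−ℓ} ≥ C(p,i) for every 0 ≤ i ≤ p. (This is Corollary 3.3: combining the Betti number formula of Theorem 3.1 with the lower bound β_i ≥ C(p,i) valid for modules with a pure resolution of projective dimension p yields these inequalities for the h-vector.) -/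
/-!
Comparing coefficients of `X ^ D i` in the identity: on the left, the coefficients of `(1 - X) ^ m`
are signed binomial coefficients, so the coefficient is the alternating convolution
`∑ ℓ, (-1) ^ ℓ * C(m, ℓ) * h (D i - ℓ)`; on the right, the exponents `D j` are distinct and
positive, so it is `(-1) ^ (i + 1) * β i`. Hence the sum in the conclusion is exactly `β i`.
-/

open Polynomial Finset

namespace Polynomial

variable {R : Type*}

theorem coeff_sum_range_C_mul_X_pow [Semiring R] {d : ℕ} {h : ℕ → R}
    (hh : ∀ j, d < j → h j = 0) (k : ℕ) :
    (∑ j ∈ range (d + 1), C (h j) * X ^ j).coeff k = h k := by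
  simp only [finsetSum_coeff, coeff_C_mul_X_pow, sum_ite_eq, mem_range]
  split_ifs with hk
  · rfl
  · exact (hh k (by omega)).symm

theorem coeff_one_sub_X_pow [CommRing R] (m k : ℕ) :
    ((1 - X : R[X]) ^ m).coeff k = (-1) ^ k * m.choose k := by
  have hexpand : (1 - X : R[X]) ^ m =
      ∑ j ∈ range (m + 1), C ((-1 : R) ^ j * m.choose j) * X ^ j := by
    rw [sub_eq_neg_add, add_pow]
    refine sum_congr rfl fun j _ => ?_
    rw [C_mul, C_pow, C_neg, C_1, map_natCast]
    ring
  rw [hexpand, coeff_sum_range_C_mul_X_pow]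
  intro j hj
  rw [Nat.choose_eq_zero_of_lt hj, Nat.cast_zero, mul_zero]

theorem coeff_one_sub_X_pow_mul [CommRing R] (m n : ℕ) (q : R[X]) :
    ((1 - X) ^ m * q).coeff n =
      ∑ ℓ ∈ range (n + 1), (-1) ^ ℓ * m.choose ℓ * q.coeff (n - ℓ) := by
  simp only [coeff_mul, Nat.sum_antidiagonal_eq_sum_range_succ_mk, coeff_one_sub_X_pow]

theorem coeff_sum_C_mul_X_pow_of_injOn [Semiring R] {ι : Type*} {s : Finset ι} {D : ι → ℕ}
    (hD : Set.InjOn D s) (a : ι → R) {i : ι} (hi : i ∈ s) :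
    (∑ j ∈ s, C (a j) * X ^ (D j)).coeff (D i) = a i := by
  rw [finsetSum_coeff, sum_eq_single_of_mem i hi]
  · simp
  · intro j hj hji
    rw [coeff_C_mul_X_pow, if_neg fun h => hji (hD hi hj h).symm]

end Polynomial

theorem pure_resolution_h_vector_inequalities_general (m d p : ℕ)
    (h : ℕ → ℤ) (hh : ∀ j, d < j → h j = 0)
    (β : ℕ → ℤ) (D : ℕ → ℕ)
    (hD0 : 1 ≤ D 0) (hDmono : ∀ i, i < p → D i < D (i + 1))
    (hid : (1 - X : ℤ[X]) ^ m * ∑ j ∈ range (d + 1), C (h j) * X ^ j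
      = 1 + ∑ i ∈ range (p + 1), (-1) ^ (i + 1) * C (β i) * X ^ (D i))
    (hβ : ∀ i ≤ p, (p.choose i : ℤ) ≤ β i) :
    ∀ i ≤ p, (p.choose i : ℤ) ≤ ∑ ℓ ∈ range (D i + 1),
      (-1) ^ (ℓ + i + 1) * (m.choose ℓ : ℤ) * h (D i - ℓ) := by
  intro i hi
  have hDstrict : StrictMonoOn D (Set.Iic p) := strictMonoOn_Iic_of_lt_succ hDmono
  have hDinj : Set.InjOn D (range (p + 1) : Set ℕ) :=
    hDstrict.injOn.mono fun j hj => by simpa [Nat.lt_succ_iff] using hj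
  have hDpos : D i ≠ 0 :=
    Nat.one_le_iff_ne_zero.mp (hD0.trans (hDstrict.monotoneOn (Nat.zero_le p) hi (Nat.zero_le i)))
  have hcoeff := congrArg (coeff · (D i)) hid
  have hsign : ∀ j, (-1 : ℤ[X]) ^ (j + 1) * C (β j) = C ((-1) ^ (j + 1) * β j) := by simp
  simp only [hsign] at hcoeff
  rw [coeff_one_sub_X_pow_mul, coeff_add, coeff_one, if_neg hDpos, zero_add,
    coeff_sum_C_mul_X_pow_of_injOn hDinj _ (by simpa [Nat.lt_succ_iff] using hi)] at hcoeff
  simp only [coeff_sum_range_C_mul_X_pow hh] at hcoeff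
  calc (p.choose i : ℤ) ≤ β i := hβ i hi
    _ = (-1) ^ (i + 1) * ((-1) ^ (i + 1) * β i) := by rw [← mul_assoc, ← mul_pow]; simp
    _ = _ := by rw [← hcoeff, mul_sum]; exact sum_congr rfl fun ℓ _ => by ring

/-- Corollary 3.3: binomial inequalities for the h-vector from the bound β_i ≥ C(p,i). -/
theorem pure_resolution_h_vector_inequalities (m d p : ℕ) (hm : 1 ≤ m)
    (h : ℕ → ℤ) (hh : ∀ j, d < j → h j = 0)
    (β : ℕ → ℤ) (D : ℕ → ℕ)
    (hD0 : 1 ≤ D 0) (hDmono : ∀ i, i < p → D i < D (i + 1))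
    (hid : (1 - X : ℤ[X]) ^ m * ∑ j ∈ range (d + 1), C (h j) * X ^ j
      = 1 + ∑ i ∈ range (p + 1), (-1) ^ (i + 1) * C (β i) * X ^ (D i))
    (hβ : ∀ i ≤ p, (p.choose i : ℤ) ≤ β i) :
    ∀ i ≤ p, (p.choose i : ℤ) ≤ ∑ ℓ ∈ range (D i + 1),
      (-1) ^ (ℓ + i + 1) * (m.choose ℓ : ℤ) * h (D i - ℓ) :=
  pure_resolution_h_vector_inequalities_general m d p h hh β D hD0 hDmono hid hβ
end

section
/- Let m ≥ 1, d ≥ 0, p ≥ 0 be integers, let h_0, …, h_d be integers, let β_0, …, β_p be integers, and let 1 ≤ d_0 < d_1 < … < d_p be integers. If the identity (1−z)^m · (Σ_{j=0}^{d} h_j z^j) = 1 + Σ_{i=0}^{p} (−1)^{i+1} β_i z^{d_i} holds in ℤ[z], then Σ_{i=0}^{p} (−1)^{i+1} β_i (d_i)^m = (−1)^m · m! · (Σ_{j=0}^{d} h_j). (This is the multiplicity formula used in Section 4: for a graded module of codimension m with a pure free resolution with shifts d_i and Betti numbers β_i, the Hilbert–Samuel multiplicity e = Σ_j h_j is determined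 by the alternating sum of the β_i weighted by the m-th powers of the shifts.) -/
/-!
Apply `m` times the Euler operator `θ = X · d/dX` to both sides and evaluate at `1`.
On the right, `θ` scales `X ^ n` by `n` and kills the constant `1`, so one gets the weighted
alternating sum of the `β i`. On the left, `θ ((1 - X) ^ k * g) = (1 - X) ^ (k - 1) * g'` with
`g'(1) = -k · g(1)`, so at `X = 1` one gets `(-1) ^ m · m! · ∑ j, h j`.
-/

open Polynomial Finset

namespace Polynomial

section CommSemiring

variable {R : Type*} [CommSemiring R]

noncomputable def eulerOperator : R[X] →ₗ[R] R[X] := LinearMap.mulLeft R X ∘ₗ derivative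

theorem eulerOperator_apply (P : R[X]) : eulerOperator P = X * derivative P := rfl

theorem eulerOperator_C_mul_X_pow (a : R) (n : ℕ) :
    eulerOperator (C a * X ^ n) = C (a * n) * X ^ n := by
  rcases n with _ | n
  · simp [eulerOperator_apply]
  · rw [eulerOperator_apply, derivative_C_mul_X_pow, C_mul, Nat.cast_succ, Nat.add_sub_cancel]
    ring

theorem eulerOperator_pow_C_mul_X_pow (a : R) (n m : ℕ) :
    (eulerOperator ^ m) (C a * X ^ n) = C (a * n ^ m) * X ^ n := by
  induction m with
  | zero => simp
  | succ k ih =>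
    rw [pow_succ', Module.End.mul_apply, ih, eulerOperator_C_mul_X_pow, pow_succ, mul_assoc]

end CommSemiring

section CommRing

variable {R : Type*} [CommRing R]

theorem eulerOperator_one_sub_X_pow_succ_mul (k : ℕ) (g : R[X]) :
    eulerOperator ((1 - X) ^ (k + 1) * g)
      = (1 - X) ^ k * (X * ((1 - X) * derivative g - C ((k : R) + 1) * g)) := by
  rw [eulerOperator_apply, derivative_mul, derivative_pow, Nat.add_sub_cancel]
  simp only [derivative_sub, derivative_one, derivative_X, map_add, map_natCast, C_1]
  push_cast
  ring

theorem eval_one_eulerOperator_pow_one_sub_X_pow_mul (m : ℕ) (g : R[X]) :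
    eval 1 ((eulerOperator ^ m) ((1 - X) ^ m * g)) = (-1) ^ m * m.factorial * eval 1 g := by
  induction m generalizing g with
  | zero => simp
  | succ k ih =>
    rw [pow_succ, Module.End.mul_apply, eulerOperator_one_sub_X_pow_succ_mul, ih]
    simp only [eval_mul, eval_X, eval_sub, eval_one, eval_C, sub_self, Nat.factorial_succ]
    push_cast
    ring

end CommRing

end Polynomial

theorem pure_resolution_multiplicity_general (m d p : ℕ) (hm : 1 ≤ m)
    (h : ℕ → ℤ)
    (β : ℕ → ℤ) (D : ℕ → ℕ)
    (hid : (1 - X : ℤ[X]) ^ m * ∑ j ∈ range (d + 1), C (h j) * X ^ j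
      = 1 + ∑ i ∈ range (p + 1), (-1) ^ (i + 1) * C (β i) * X ^ (D i)) :
    ∑ i ∈ range (p + 1), (-1) ^ (i + 1) * β i * ((D i : ℤ)) ^ m
      = (-1) ^ m * (m.factorial : ℤ) * ∑ j ∈ range (d + 1), h j := by
  have lhs : eval 1 ((eulerOperator ^ m)
        ((1 - X : ℤ[X]) ^ m * ∑ j ∈ range (d + 1), C (h j) * X ^ j))
      = (-1) ^ m * (m.factorial : ℤ) * ∑ j ∈ range (d + 1), h j := by
    simp [eval_one_eulerOperator_pow_one_sub_X_pow_mul, eval_finsetSum]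
  have rhs : eval 1 ((eulerOperator ^ m)
        (1 + ∑ i ∈ range (p + 1), (-1) ^ (i + 1) * C (β i) * X ^ (D i) : ℤ[X]))
      = ∑ i ∈ range (p + 1), (-1) ^ (i + 1) * β i * ((D i : ℤ)) ^ m := by
    have hone : (eulerOperator ^ m) (1 : ℤ[X]) = 0 := by
      simpa [zero_pow (by omega : m ≠ 0)] using eulerOperator_pow_C_mul_X_pow (1 : ℤ) 0 m
    have hterm (i : ℕ) : ((-1) ^ (i + 1) * C (β i) * X ^ (D i) : ℤ[X])
        = C ((-1) ^ (i + 1) * β i) * X ^ (D i) := by simp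
    simp only [map_add, map_sum, hone, hterm, eulerOperator_pow_C_mul_X_pow]
    simp [eval_finsetSum]
  rw [← lhs, ← rhs, hid]

/-- The multiplicity formula: for a pure resolution of codimension `m`, the
alternating sum of the Betti numbers weighted by the `m`-th powers of the shifts
equals `(-1)^m · m! · Σ h_j`. -/
theorem pure_resolution_multiplicity (m d p : ℕ) (hm : 1 ≤ m)
    (h : ℕ → ℤ) (hh : ∀ j, d < j → h j = 0)
    (β : ℕ → ℤ) (D : ℕ → ℕ)
    (hD0 : 1 ≤ D 0) (hDmono : ∀ i, i < p → D i < D (i + 1))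
    (hid : (1 - X : ℤ[X]) ^ m * ∑ j ∈ range (d + 1), C (h j) * X ^ j
      = 1 + ∑ i ∈ range (p + 1), (-1) ^ (i + 1) * C (β i) * X ^ (D i)) :
    ∑ i ∈ range (p + 1), (-1) ^ (i + 1) * β i * ((D i : ℤ)) ^ m
      = (-1) ^ m * (m.factorial : ℤ) * ∑ j ∈ range (d + 1), h j :=
  pure_resolution_multiplicity_general m d p hm h β D hid
end

section
/- Let Δ be a simplicial complex on [n] = {1, …, n} and let k* ≥ 1 be such that every subset of [n] of cardinality k* − 1 belongs to Δ but some subset of cardinality k* does not. Let Δ* = { F ⊆ [n] : [n] ∖ F ∉ Δ } be the Alexander dual, set d* = n − k*, let f*_{i−1} denote the number of elements of Δ* of cardinality i, and define the h-vector h*_0, …, h*_{d*} of Δ* by Σ_{j=0}^{d*} h*_j z^j = Σ_{i=0}^{d*} f*_{i−1} z^i (1−z)^{d*−i}. Suppose t ≥ 1, p ≥ 0 and integers β*_0, …, β*_p satisfy the identity (1−z)^{k*} · (Σ_{j=0}^{d*} h*_j z^j) = 1 + Σ_{i=0}^{p} (−1)^{i+1} β*_i z^{t+i} in ℤ[z].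 Then Σ_{i=0}^{p} (−1)^{i+1} β*_i (t+i)^{k*} = (−1)^{k*} · k*! · ( C(n,k*) − f_{k*−1}(Δ) ), where f_{k*−1}(Δ) is the number of elements of Δ of cardinality k*. (This is Corollary 4.4: for a Cohen–Macaulay complex Δ of dimension d−1 on [n], by the Eagon–Reiner theorem k[Δ*] has a t-linear resolution with t = n−d, and the equation relates the Betti numbers β*_i of that resolution to C(n,k*) − f_{k*−1}, the multiplicity of k[Δ*].) -/
/-!
Apply the Euler operator `θ = X · d/dX` `k` times to the identity and evaluate at `1`.
On the right, `θ ^ k` multiplies `X ^ m` by `m ^ k` and kills the constant `1`, leaving the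
alternating sum of the `β* i (t + i) ^ k`. On the left, only the term in which every `θ`
differentiates the factor `(1 - X) ^ k` survives at `1`, giving `(-1) ^ k k! h*(1)`, and
`h*(1) = f*_{d*-1}` counts the faces of `Δ*` of size `n - k`. Complementation identifies these
with the `k`-subsets of `[n]` outside `Δ`, so `h*(1) = C(n, k) - f_{k-1}(Δ)`.
-/

open Polynomial Finset

namespace Polynomial

variable {R : Type*}

section CommSemiring

variable [CommSemiring R]

variable (R) in
noncomputable def eulerOp : Module.End R R[X] :=
  LinearMap.mulLeft R X ∘ₗ derivative

theorem eulerOp_apply (p : R[X]) : eulerOp R p = X * derivative p := rfl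

theorem eulerOp_C_mul_X_pow (c : R) (m : ℕ) :
    eulerOp R (C c * X ^ m) = C (c * m) * X ^ m := by
  cases m with
  | zero => simp [eulerOp_apply]
  | succ m =>
    rw [eulerOp_apply, derivative_C_mul_X_pow, C_mul, Nat.add_sub_cancel]
    ring

theorem eulerOp_pow_C_mul_X_pow (k : ℕ) (c : R) (m : ℕ) :
    (eulerOp R ^ k) (C c * X ^ m) = C (c * m ^ k) * X ^ m := by
  induction k with
  | zero => simp
  | succ k ih =>
    rw [pow_succ', Module.End.mul_apply, ih, eulerOp_C_mul_X_pow, mul_assoc, pow_succ]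

theorem eulerOp_pow_one {k : ℕ} (hk : k ≠ 0) : (eulerOp R ^ k) 1 = 0 := by
  obtain ⟨k, rfl⟩ := Nat.exists_eq_succ_of_ne_zero hk
  rw [pow_succ, Module.End.mul_apply, eulerOp_apply, derivative_one, mul_zero, map_zero]

end CommSemiring

section CommRing

variable [CommRing R]

theorem eulerOp_one_sub_X_pow_succ_mul (j : ℕ) (q : R[X]) :
    eulerOp R ((1 - X) ^ (j + 1) * q)
      = (1 - X) ^ j * (-(C ((j : R) + 1)) * X * q + (1 - X) * eulerOp R q) := by
  simp only [eulerOp_apply, derivative_mul, derivative_pow, derivative_sub, derivative_one,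
    derivative_X, C_add, C_1, map_natCast, Nat.cast_add, Nat.cast_one, Nat.add_sub_cancel]
  ring

/-- `θ` lowers the order of vanishing at `1` by one, so at `1` only the term in which every
`θ` differentiates `(1 - X) ^ j` survives. -/
theorem eval_one_eulerOp_pow_one_sub_X_pow_mul (j : ℕ) (q : R[X]) :
    ((eulerOp R ^ j) ((1 - X) ^ j * q)).eval 1 = (-1) ^ j * j.factorial * q.eval 1 := by
  induction j generalizing q with
  | zero => simp
  | succ j ih =>
    rw [pow_succ, Module.End.mul_apply, eulerOp_one_sub_X_pow_succ_mul, ih]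
    simp [Nat.factorial_succ]
    ring

theorem eval_one_sum_C_mul_X_pow_mul_one_sub_X_pow (d : ℕ) (f : ℕ → R) :
    (∑ i ∈ range (d + 1), C (f i) * X ^ i * (1 - X) ^ (d - i)).eval 1 = f d := by
  rw [eval_finsetSum, sum_range_succ, sum_eq_zero, zero_add]
  · simp
  · intro i hi
    simp [Nat.sub_ne_zero_of_lt (mem_range.mp hi)]

end CommRing

end Polynomial

namespace Finset

variable {α : Type*} [Fintype α] [DecidableEq α]

theorem card_filter_compl_notMem_eq (Δ : Finset (Finset α)) {k : ℕ}
    (hk : k ≤ Fintype.card α) :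
    #{F | Fᶜ ∉ Δ ∧ #F = Fintype.card α - k} = #{G | G ∉ Δ ∧ #G = k} := by
  refine card_nbij' compl compl ?_ ?_ (fun F _ => compl_compl F) (fun G _ => compl_compl G)
  all_goals
    intro F hF
    simp only [coe_filter, mem_univ, true_and, Set.mem_ofPred_eq, card_compl, compl_compl]
      at hF ⊢
    exact ⟨hF.1, by omega⟩

theorem card_filter_compl_notMem_add_card_filter_card_eq (Δ : Finset (Finset α)) {k : ℕ}
    (hk : k ≤ Fintype.card α) :
    #{F | Fᶜ ∉ Δ ∧ #F = Fintype.card α - k} + #{F ∈ Δ | #F = k}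
      = (Fintype.card α).choose k := by
  have hsplit :=
    card_filter_add_card_filter_not (s := powersetCard k (univ : Finset α)) (· ∉ Δ)
  rw [card_powersetCard, card_univ] at hsplit
  rw [card_filter_compl_notMem_eq Δ hk, ← hsplit]
  congr 2 <;> ext G <;> simp [mem_powersetCard, and_comm]

end Finset

theorem alexander_dual_multiplicity_formula_general (n : ℕ) (Δ : Finset (Finset (Fin n)))
    (k : ℕ) (hk : 1 ≤ k)
    (hsome : ∃ F : Finset (Fin n), F.card = k ∧ F ∉ Δ)
    (hstar : ℕ → ℤ)
    (hdef : ∑ j ∈ range (n - k + 1), C (hstar j) * X ^ j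
      = ∑ i ∈ range (n - k + 1),
          C (((((univ : Finset (Finset (Fin n))).filter
              (fun F => Fᶜ ∉ Δ ∧ F.card = i)).card : ℤ)))
            * X ^ i * (1 - X : ℤ[X]) ^ (n - k - i))
    (t p : ℕ) (βstar : ℕ → ℤ)
    (hres : (1 - X : ℤ[X]) ^ k * ∑ j ∈ range (n - k + 1), C (hstar j) * X ^ j
      = 1 + ∑ i ∈ range (p + 1), (-1) ^ (i + 1) * C (βstar i) * X ^ (t + i)) :
    ∑ i ∈ range (p + 1), (-1) ^ (i + 1) * βstar i * ((t + i : ℕ) : ℤ) ^ k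
      = (-1) ^ k * (k.factorial : ℤ) *
        ((n.choose k : ℤ) - ((Δ.filter (fun F => F.card = k)).card : ℤ)) := by
  obtain ⟨F, hF, -⟩ := hsome
  have hcount := card_filter_compl_notMem_add_card_filter_card_eq Δ (hF ▸ F.card_le_univ)
  rw [Fintype.card_fin] at hcount
  have hterm (i : ℕ) : ((-1) ^ (i + 1) * C (βstar i) * X ^ (t + i) : ℤ[X])
      = C ((-1) ^ (i + 1) * βstar i) * X ^ (t + i) := by
    simp
  have hθ := congrArg (fun P => ((eulerOp ℤ ^ k) P).eval 1) hres
  simp only [hterm] at hθ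
  rw [eval_one_eulerOp_pow_one_sub_X_pow_mul, hdef, eval_one_sum_C_mul_X_pow_mul_one_sub_X_pow,
    map_add, eulerOp_pow_one (by omega), zero_add, map_sum, eval_finsetSum] at hθ
  simp only [eulerOp_pow_C_mul_X_pow, eval_mul_X_pow, eval_C, one_pow, mul_one] at hθ
  rw [← hθ, ← hcount]
  push_cast
  ring

/-- Corollary 4.4: for a complex `Δ` on `[n]` with `k` as in Corollary 2.8, if the
Stanley–Reisner ring of the Alexander dual `Δ* = {F : Fᶜ ∉ Δ}` has a `t`-linear
free resolution with Betti numbers `β* i` (encoded by the Hilbert-series identity,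
where `h*` is the h-vector of `Δ*`, `d* = n - k`, and `f*_{i-1}` counts the faces
of `Δ*` of cardinality `i`), then the alternating sum of the `β* i` weighted by
the `k`-th powers of the shifts equals `(-1)^k · k! · (C(n,k) - f_{k-1}(Δ))`. -/
theorem alexander_dual_multiplicity_formula (n : ℕ) (Δ : Finset (Finset (Fin n)))
    (hclosed : ∀ F ∈ Δ, ∀ G ⊆ F, G ∈ Δ)
    (k : ℕ) (hk : 1 ≤ k)
    (hall : ∀ F : Finset (Fin n), F.card = k - 1 → F ∈ Δ)
    (hsome : ∃ F : Finset (Fin n), F.card = k ∧ F ∉ Δ)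
    (hstar : ℕ → ℤ)
    (hdef : ∑ j ∈ range (n - k + 1), C (hstar j) * X ^ j
      = ∑ i ∈ range (n - k + 1),
          C (((((univ : Finset (Finset (Fin n))).filter
              (fun F => Fᶜ ∉ Δ ∧ F.card = i)).card : ℤ)))
            * X ^ i * (1 - X : ℤ[X]) ^ (n - k - i))
    (t p : ℕ) (ht : 1 ≤ t) (βstar : ℕ → ℤ)
    (hres : (1 - X : ℤ[X]) ^ k * ∑ j ∈ range (n - k + 1), C (hstar j) * X ^ j
      = 1 + ∑ i ∈ range (p + 1), (-1) ^ (i + 1) * C (βstar i) * X ^ (t + i)) :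
    ∑ i ∈ range (p + 1), (-1) ^ (i + 1) * βstar i * ((t + i : ℕ) : ℤ) ^ k
      = (-1) ^ k * (k.factorial : ℤ) *
        ((n.choose k : ℤ) - ((Δ.filter (fun F => F.card = k)).card : ℤ)) :=
  alexander_dual_multiplicity_formula_general n Δ k hk hsome hstar hdef t p βstar hres
end
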